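/- arXiv:1701.07949 — 3 statements merged into one kernel-verified Lean document; each statement's English description precedes it below -/
import Mathlib

section
/- Define a relation on Kostant partitions of ν by (n₁,…,n_N) ⪯ (m₁,…,m_N) iff for all 1 ≤ k ≤ N, Σ_{t=1}^k ⟨γ_k, β_t⟩ n_t ≤ Σ_{t=1}^k ⟨γ_k, β_t⟩ m_t, where β_k, γ_k come from a reduced expression of w₀. This relation is a partial order (reflexive, transitive, antisymmetric) on KP(ν). -/
/-- `β_k = s_{i₁} ⋯ s_{i_{k-1}} α_{i_k}`. -/
noncomputable def kpBeta {I : Type} {V : Type} [AddCommGroup V] [Module ℝ V]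
    (s : I → V ≃ₗ[ℝ] V) (α : I → V) {N : ℕ} (ii : Fin N → I) (k : Fin N) : V :=
  ((((List.ofFn ii).take k.val).map s).prod) (α (ii k))

/-- `γ_k = - s_{i₁} ⋯ s_{i_k} ω^∨_{i_k}`. -/
noncomputable def kpGamma {I : Type} {V : Type} [AddCommGroup V] [Module ℝ V]
    (sD : I → Module.Dual ℝ V ≃ₗ[ℝ] Module.Dual ℝ V) (ω : I → Module.Dual ℝ V)
    {N : ℕ} (ii : Fin N → I) (k : Fin N) : Module.Dual ℝ V :=
  -((((List.ofFn ii).take (k.val + 1)).map sD).prod (ω (ii k)))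

/-- The order on Kostant partitions:
`n ⪯ m` iff `Σ_{t=1}^k ⟨γ_k, β_t⟩ n_t ≤ Σ_{t=1}^k ⟨γ_k, β_t⟩ m_t` for all `k`. -/
noncomputable def kpLE {I : Type} {V : Type} [AddCommGroup V] [Module ℝ V]
    (s : I → V ≃ₗ[ℝ] V) (sD : I → Module.Dual ℝ V ≃ₗ[ℝ] Module.Dual ℝ V)
    (α : I → V) (ω : I → Module.Dual ℝ V)
    {N : ℕ} (ii : Fin N → I) (n m : Fin N → ℕ) : Prop :=
  ∀ k : Fin N,
    ∑ t ∈ Finset.univ.filter (fun t => t ≤ k), kpGamma sD ω ii k (kpBeta s α ii t) * (n t : ℝ)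
    ≤ ∑ t ∈ Finset.univ.filter (fun t => t ≤ k), kpGamma sD ω ii k (kpBeta s α ii t) * (m t : ℝ)

lemma lequiv_mul_apply {R M : Type*} [CommRing R] [AddCommGroup M] [Module R M]
    (e₁ e₂ : M ≃ₗ[R] M) (v : M) : (e₁ * e₂) v = e₁ (e₂ v) := rfl

lemma dual_prod_apply {I : Type} {V : Type} [AddCommGroup V] [Module ℝ V]
    (s : I → V ≃ₗ[ℝ] V) (sD : I → Module.Dual ℝ V ≃ₗ[ℝ] Module.Dual ℝ V)
    (hsD : ∀ i (f : Module.Dual ℝ V) (v : V), sD i f (s i v) = f v) :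
    ∀ (l : List I) (f : Module.Dual ℝ V) (v : V),
      ((l.map sD).prod f) ((l.map s).prod v) = f v := by
  intro l
  induction l with
  | nil => intro f v; simp
  | cons i l ih =>
      intro f v
      simp only [List.map_cons, List.prod_cons, lequiv_mul_apply]
      rw [hsD, ih]

lemma diag_one {I : Type} [DecidableEq I] {V : Type} [AddCommGroup V] [Module ℝ V]
    (s : I → V ≃ₗ[ℝ] V) (sD : I → Module.Dual ℝ V ≃ₗ[ℝ] Module.Dual ℝ V)
    (α : I → V) (αv : I → Module.Dual ℝ V) (ω : I → Module.Dual ℝ V)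
    (hs : ∀ i v, s i v = v - αv i v • α i)
    (hαα : ∀ i, αv i (α i) = 2)
    (hsD : ∀ i (f : Module.Dual ℝ V) (v : V), sD i f (s i v) = f v)
    (hω : ∀ i j, ω i (α j) = if i = j then (1 : ℝ) else 0)
    {N : ℕ} (ii : Fin N → I) (k : Fin N) :
    kpGamma sD ω ii k (kpBeta s α ii k) = 1 := by
  have htake : (List.ofFn ii).take (k.val + 1) = (List.ofFn ii).take k.val ++ [ii k] := by
    rw [List.take_succ, List.getElem?_ofFn]
    simp [List.ofFnNthVal, k.isLt]
  have hfix : s (ii k) (-(α (ii k))) = α (ii k) := by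
    rw [hs, map_neg, hαα]
    module
  have hinner : sD (ii k) (ω (ii k)) (α (ii k)) = -1 := by
    rw [← hfix, hsD, map_neg, hω]
    simp
  unfold kpGamma kpBeta
  rw [htake]
  simp only [List.map_append, List.prod_append, List.map_cons, List.map_nil,
    List.prod_cons, List.prod_nil, mul_one, lequiv_mul_apply,
    LinearMap.neg_apply]
  rw [dual_prod_apply s sD hsD, hinner]
  norm_num

/-- The relation ⪯ is a partial order on the set of Kostant partitions of ν. -/
theorem stmt_5
    {I : Type} [Fintype I] [DecidableEq I]
    {V : Type} [AddCommGroup V] [Module ℝ V]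
    (s : I → V ≃ₗ[ℝ] V)
    (sD : I → Module.Dual ℝ V ≃ₗ[ℝ] Module.Dual ℝ V)
    (α : I → V) (αv : I → Module.Dual ℝ V) (ω : I → Module.Dual ℝ V)
    -- `s i` is the simple reflection associated to the simple root `α i`
    (hs : ∀ i v, s i v = v - αv i v • α i)
    (hαα : ∀ i, αv i (α i) = 2)
    -- crystallographic condition
    (hcrys : ∀ i j, ∃ z : ℤ, αv i (α j) = (z : ℝ))
    -- `sD i` is the contragredient action of `s i` on the dual space
    (hsD : ∀ i (f : Module.Dual ℝ V) (v : V), sD i f (s i v) = f v)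
    -- the `ω i` are the fundamental coweights: `⟨ω_i^∨, α_j⟩ = δ_{ij}`
    (hω : ∀ i j, ω i (α j) = if i = j then (1 : ℝ) else 0)
    (N : ℕ) (ii : Fin N → I)
    -- the word `ii` is reduced
    (hred : ∀ l : List I, (l.map s).prod = ((List.ofFn ii).map s).prod → N ≤ l.length)
    -- and represents the longest element of the Weyl group
    (hlong : ∀ l : List I, ∃ l' : List I, l'.length ≤ N ∧
      (l'.map s).prod = (l.map s).prod)
    (ν : V) :
    (∀ n : Fin N → ℕ, kpLE s sD α ω ii n n) ∧
    (∀ a b c : Fin N → ℕ,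
      kpLE s sD α ω ii a b → kpLE s sD α ω ii b c → kpLE s sD α ω ii a c) ∧
    (∀ a b : Fin N → ℕ,
      (∑ t, (a t : ℝ) • kpBeta s α ii t = ν) → (∑ t, (b t : ℝ) • kpBeta s α ii t = ν) →
      kpLE s sD α ω ii a b → kpLE s sD α ω ii b a → a = b) := by
  refine ⟨fun n k => le_refl _, fun a b c hab hbc k => le_trans (hab k) (hbc k), ?_⟩
  intro a b _ _ hab hba
  have key : ∀ n : ℕ, ∀ k : Fin N, k.val = n → a k = b k := by
    intro n
    induction n using Nat.strong_induction_on with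
    | _ n IH =>
      intro k hk
      have heq := le_antisymm (hab k) (hba k)
      have hsplit : Finset.univ.filter (fun t => t ≤ k)
          = insert k (Finset.univ.filter (fun t => t < k)) := by
        ext t
        simp [le_iff_lt_or_eq, or_comm]
      rw [hsplit, Finset.sum_insert (by simp), Finset.sum_insert (by simp)] at heq
      have hlt : ∀ t ∈ Finset.univ.filter (fun t : Fin N => t < k),
          kpGamma sD ω ii k (kpBeta s α ii t) * (a t : ℝ)
            = kpGamma sD ω ii k (kpBeta s α ii t) * (b t : ℝ) := by
        intro t ht
        have htk : t < k := by simpa using ht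
        rw [IH t.val (hk ▸ htk) t rfl]
      rw [Finset.sum_congr rfl hlt] at heq
      have hcancel := add_right_cancel heq
      rw [diag_one s sD α αv ω hs hαα hsD hω ii k, one_mul, one_mul] at hcancel
      exact_mod_cast hcancel
  funext k
  exact key k.val k rfl
end

section
/- If two reduced expressions of the longest element w₀ are in the same commutation class (related by a sequence of commuting braid moves s_i s_j = s_j s_i for non-adjacent i, j), then the partial orders they induce on the set of Kostant partitions of any ν (via the inequalities Σ_{t=1}^k ⟨γ_k, β_t⟩ n_t ≤ Σ_{t=1}^k ⟨γ_k, β_t⟩ m_t) coincide. -/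
/-!
Swapping two adjacent commuting letters `a ≠ b` at positions `p, p + 1` of a word permutes the
roots `β_t` and the coweights `γ_k` by the transposition `σ = (p p+1)`: `s_a` fixes `α_b`, and the
dual reflection `s_b` fixes `ω_a`. Hence the `k`-th inequality of the new word is the `σ k`-th
inequality of the old one, except that the ranges `t ≤ k` and `t ≤ σ k` differ (after relabelling
by `σ`) by a single term, which pairs `γ_{p+1}` with `β_p` or `γ_p` with `β_{p+1}`; both pairings
vanish, since `⟨ω_a, α_b⟩ = 0` and commuting simple reflections have orthogonal roots.
-/

namespace KostantPartition

open Finset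

section Words

variable {I : Type} {N : ℕ}

lemma apply_eq_getElem_of_ofFn_eq {f : Fin N → I} {l : List I} (hf : List.ofFn f = l)
    (u : Fin N) : f u = l[(u : ℕ)]'(by simp [← hf]) := by
  simp only [← hf, List.getElem_ofFn]

lemma ofFn_comp_swap {f : Fin N → I} {x y : List I} {a b : I}
    (hf : List.ofFn f = x ++ a :: b :: y) {p q : Fin N} (hp : (p : ℕ) = x.length)
    (hq : (q : ℕ) = x.length + 1) :
    List.ofFn (f ∘ Equiv.swap p q) = x ++ b :: a :: y := by
  have hN : N = x.length + 2 + y.length := by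
    simpa [Nat.add_comm, Nat.add_left_comm, Nat.add_assoc] using congrArg List.length hf
  apply List.ext_getElem (by simp; omega)
  intro t ht _
  simp only [List.getElem_ofFn, Function.comp_apply, apply_eq_getElem_of_ofFn_eq hf,
    Equiv.swap_apply_def]
  split_ifs <;> simp [List.getElem_append, List.getElem_cons] <;> grind

lemma take_length_add_one_append_cons (x y : List I) (a : I) :
    (x ++ a :: y).take (x.length + 1) = x ++ [a] := by
  simp [List.take_append]

lemma take_length_add_two_append_cons_cons (x y : List I) (a b : I) :
    (x ++ a :: b :: y).take (x.length + 1 + 1) = x ++ [a, b] := by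
  rw [List.take_append, List.take_of_length_le (by omega), Nat.add_assoc, Nat.add_sub_cancel_left]
  rfl

lemma prod_map_take_append_cons_cons_swap {M : Type*} [Monoid M] (g : I → M) (x y : List I)
    {a b : I} (hc : g a * g b = g b * g a) {k : ℕ} (hk : k ≠ x.length + 1) :
    (((x ++ b :: a :: y).take k).map g).prod = (((x ++ a :: b :: y).take k).map g).prod := by
  rcases le_or_gt k x.length with hk' | hk'
  · rw [List.take_append_of_le_length hk', List.take_append_of_le_length hk']
  · obtain ⟨j, rfl⟩ : ∃ j, k = x.length + 2 + j := ⟨k - (x.length + 2), by omega⟩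
    simp only [List.take_append, show x.length + 2 + j - x.length = j + 1 + 1 by omega,
      List.take_succ_cons, List.map_append, List.map_cons, List.prod_append, List.prod_cons,
      ← mul_assoc, hc]

end Words

lemma swap_apply_eq_of_not_le_iff {N : ℕ} {p q : Fin N} (hpq : (q : ℕ) = p + 1) {t k : Fin N}
    (h : ¬(t ≤ k ↔ Equiv.swap p q t ≤ Equiv.swap p q k)) :
    Equiv.swap p q t = k ∧ (k = p ∨ k = q) := by
  simp only [Equiv.swap_apply_def] at *
  split_ifs at * <;> simp only [Fin.le_def, Fin.ext_iff] at * <;> grind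

lemma sum_filter_le_comp_swap {N : ℕ} (g : Fin N → ℝ) {p q : Fin N} (hpq : (q : ℕ) = p + 1)
    (k : Fin N) (hk : k = p ∨ k = q → g k = 0) :
    ∑ t ∈ univ.filter (· ≤ k), g (Equiv.swap p q t)
      = ∑ t ∈ univ.filter (· ≤ Equiv.swap p q k), g t := by
  rw [sum_filter, sum_filter]
  conv_rhs => rw [← Equiv.sum_comp (Equiv.swap p q)]
  refine sum_congr rfl fun t _ => ?_
  by_cases hle : t ≤ k ↔ Equiv.swap p q t ≤ Equiv.swap p q k
  · exact if_congr hle rfl rfl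
  · obtain ⟨htk, hkpq⟩ := swap_apply_eq_of_not_le_iff hpq hle
    simp [htk, hk hkpq]

variable {I V : Type} [AddCommGroup V] [Module ℝ V]

def CommutationMove (s : I → V ≃ₗ[ℝ] V) (l₁ l₂ : List I) : Prop :=
  ∃ (a b : I) (x y : List I),
    s a * s b = s b * s a ∧ l₁ = x ++ a :: b :: y ∧ l₂ = x ++ b :: a :: y

section Roots

variable (s : I → V ≃ₗ[ℝ] V) (sD : I → Module.Dual ℝ V ≃ₗ[ℝ] Module.Dual ℝ V)
  (α : I → V) (ω : I → Module.Dual ℝ V) {N : ℕ}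

lemma kpBeta_of_ofFn_eq {f : Fin N → I} {l : List I} (hf : List.ofFn f = l) (t : Fin N) :
    kpBeta s α f t = ((l.take t).map s).prod (α (f t)) := by
  rw [kpBeta, hf]

lemma kpGamma_of_ofFn_eq {f : Fin N → I} {l : List I} (hf : List.ofFn f = l) (k : Fin N) :
    kpGamma sD ω f k = -((l.take (k + 1)).map sD).prod (ω (f k)) := by
  rw [kpGamma, hf]

end Roots

variable [DecidableEq I]

structure IsReflectionSystem (s : I → V ≃ₗ[ℝ] V)
    (sD : I → Module.Dual ℝ V ≃ₗ[ℝ] Module.Dual ℝ V)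
    (α : I → V) (αv : I → Module.Dual ℝ V) (ω : I → Module.Dual ℝ V) : Prop where
  reflection_apply : ∀ i v, s i v = v - αv i v • α i
  coroot_root_self : ∀ i, αv i (α i) = 2
  dual_apply_reflection : ∀ i (f : Module.Dual ℝ V) (v : V), sD i f (s i v) = f v
  weight_root : ∀ i j, ω i (α j) = if i = j then (1 : ℝ) else 0

namespace IsReflectionSystem

variable {s : I → V ≃ₗ[ℝ] V} {sD : I → Module.Dual ℝ V ≃ₗ[ℝ] Module.Dual ℝ V}
  {α : I → V} {αv : I → Module.Dual ℝ V} {ω : I → Module.Dual ℝ V}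
  (h : IsReflectionSystem s sD α αv ω)
include h

lemma reflection_reflection (i : I) (v : V) : s i (s i v) = v := by
  rw [h.reflection_apply i (s i v), h.reflection_apply i v]
  simp only [map_sub, map_smul, h.coroot_root_self, smul_eq_mul]
  module

lemma dual_apply (i : I) (f : Module.Dual ℝ V) (v : V) : sD i f v = f (s i v) := by
  rw [← h.dual_apply_reflection i f (s i v), h.reflection_reflection]

lemma dual_prod_apply_prod_apply (l : List I) (f : Module.Dual ℝ V) (v : V) :
    (l.map sD).prod f ((l.map s).prod v) = f v := by
  induction l generalizing f v with
  | nil => simp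
  | cons i l ih => simp [LinearEquiv.mul_apply, h.dual_apply_reflection, ih]

lemma dual_apply_weight_of_ne {a b : I} (hab : a ≠ b) : sD b (ω a) = ω a := by
  ext v
  simp [h.dual_apply, h.reflection_apply b v, h.weight_root, hab]

lemma dual_mul_comm {a b : I} (hc : s a * s b = s b * s a) : sD a * sD b = sD b * sD a := by
  ext f v
  simp only [LinearEquiv.mul_apply, h.dual_apply]
  rw [← LinearEquiv.mul_apply, ← hc, LinearEquiv.mul_apply]

lemma coroot_root_eq_zero_of_commute {a b : I} (hab : a ≠ b) (hc : s a * s b = s b * s a) :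
    αv a (α b) = 0 := by
  -- `ω_a` takes the values `⟨α_a^∨, α_b⟩` and `-⟨α_a^∨, α_b⟩` on the two sides
  have key : ω a ((s a * s b) (α b)) = ω a ((s b * s a) (α b)) := by rw [hc]
  simp [h.reflection_apply, h.coroot_root_self, h.weight_root, hab] at key
  linarith

lemma reflection_root_of_commute {a b : I} (hab : a ≠ b) (hc : s a * s b = s b * s a) :
    s a (α b) = α b := by
  simp [h.reflection_apply, h.coroot_root_eq_zero_of_commute hab hc]

lemma dual_apply_dual_apply_weight_of_commute {a b : I} (hab : a ≠ b)
    (hc : s a * s b = s b * s a) : sD a (sD b (ω b)) = sD b (ω b) := by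
  rw [← LinearEquiv.mul_apply, h.dual_mul_comm hc, LinearEquiv.mul_apply,
    h.dual_apply_weight_of_ne hab.symm]

end IsReflectionSystem

section Swap

variable {s : I → V ≃ₗ[ℝ] V} {sD : I → Module.Dual ℝ V ≃ₗ[ℝ] Module.Dual ℝ V}
  {α : I → V} {αv : I → Module.Dual ℝ V} {ω : I → Module.Dual ℝ V}
  (h : IsReflectionSystem s sD α αv ω)
  {N : ℕ} {f : Fin N → I} {x y : List I} {a b : I} (hf : List.ofFn f = x ++ a :: b :: y)
  (hab : a ≠ b) (hc : s a * s b = s b * s a)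
  {p q : Fin N} (hp : (p : ℕ) = x.length) (hq : (q : ℕ) = x.length + 1)
include h hf hab hc hp hq

lemma kpBeta_comp_swap (t : Fin N) :
    kpBeta s α (f ∘ Equiv.swap p q) t = kpBeta s α f (Equiv.swap p q t) := by
  have hfp : f p = a := by simp [apply_eq_getElem_of_ofFn_eq hf, hp]
  have hfq : f q = b := by simp [apply_eq_getElem_of_ofFn_eq hf, hq]
  rw [kpBeta_of_ofFn_eq s α (ofFn_comp_swap hf hp hq), kpBeta_of_ofFn_eq s α hf]
  rcases eq_or_ne t p with rfl | htp
  · simp [hp, hq, hfq, take_length_add_one_append_cons, LinearEquiv.mul_apply,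
      h.reflection_root_of_commute hab hc]
  rcases eq_or_ne t q with rfl | htq
  · simp [hp, hq, hfp, take_length_add_one_append_cons, LinearEquiv.mul_apply,
      h.reflection_root_of_commute hab.symm hc.symm]
  rw [Equiv.swap_apply_of_ne_of_ne htp htq, Function.comp_apply,
    Equiv.swap_apply_of_ne_of_ne htp htq,
    prod_map_take_append_cons_cons_swap s x y hc (by omega)]

lemma kpGamma_comp_swap (k : Fin N) :
    kpGamma sD ω (f ∘ Equiv.swap p q) k = kpGamma sD ω f (Equiv.swap p q k) := by
  have hfp : f p = a := by simp [apply_eq_getElem_of_ofFn_eq hf, hp]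
  have hfq : f q = b := by simp [apply_eq_getElem_of_ofFn_eq hf, hq]
  rw [kpGamma_of_ofFn_eq sD ω (ofFn_comp_swap hf hp hq), kpGamma_of_ofFn_eq sD ω hf]
  rcases eq_or_ne k p with rfl | hkp
  · simp [hp, hq, hfq, take_length_add_one_append_cons, take_length_add_two_append_cons_cons,
      LinearEquiv.mul_apply, h.dual_apply_dual_apply_weight_of_commute hab hc]
  rcases eq_or_ne k q with rfl | hkq
  · simp [hp, hq, hfp, take_length_add_one_append_cons, take_length_add_two_append_cons_cons,
      LinearEquiv.mul_apply, h.dual_apply_dual_apply_weight_of_commute hab.symm hc.symm]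
  rw [Equiv.swap_apply_of_ne_of_ne hkp hkq, Function.comp_apply,
    Equiv.swap_apply_of_ne_of_ne hkp hkq,
    prod_map_take_append_cons_cons_swap sD x y (h.dual_mul_comm hc) (by omega)]

lemma kpGamma_right_apply_kpBeta_left_eq_zero : kpGamma sD ω f q (kpBeta s α f p) = 0 := by
  have hfp : f p = a := by simp [apply_eq_getElem_of_ofFn_eq hf, hp]
  have hfq : f q = b := by simp [apply_eq_getElem_of_ofFn_eq hf, hq]
  rw [kpGamma_of_ofFn_eq sD ω hf, kpBeta_of_ofFn_eq s α hf]
  simp [hp, hq, hfp, hfq, take_length_add_two_append_cons_cons, LinearEquiv.mul_apply,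
    h.dual_apply_dual_apply_weight_of_commute hab hc, h.dual_prod_apply_prod_apply, h.dual_apply,
    h.reflection_root_of_commute hab.symm hc.symm, h.weight_root, hab.symm]

omit hc in
lemma kpGamma_left_apply_kpBeta_right_eq_zero : kpGamma sD ω f p (kpBeta s α f q) = 0 := by
  have hfp : f p = a := by simp [apply_eq_getElem_of_ofFn_eq hf, hp]
  have hfq : f q = b := by simp [apply_eq_getElem_of_ofFn_eq hf, hq]
  rw [kpGamma_of_ofFn_eq sD ω hf, kpBeta_of_ofFn_eq s α hf, hp, hq, hfp, hfq,
    take_length_add_one_append_cons, LinearMap.neg_apply, h.dual_prod_apply_prod_apply,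
    h.weight_root, if_neg hab, neg_zero]

lemma sum_kpGamma_kpBeta_comp_swap (c : V → ℝ) (k : Fin N) :
    ∑ t ∈ univ.filter (· ≤ k), kpGamma sD ω (f ∘ Equiv.swap p q) k
        (kpBeta s α (f ∘ Equiv.swap p q) t) * c (kpBeta s α (f ∘ Equiv.swap p q) t)
      = ∑ t ∈ univ.filter (· ≤ Equiv.swap p q k),
          kpGamma sD ω f (Equiv.swap p q k) (kpBeta s α f t) * c (kpBeta s α f t) := by
  simp only [kpBeta_comp_swap h hf hab hc hp hq, kpGamma_comp_swap h hf hab hc hp hq]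
  refine sum_filter_le_comp_swap
    (fun u => kpGamma sD ω f (Equiv.swap p q k) (kpBeta s α f u) * c (kpBeta s α f u))
    (by omega : (q : ℕ) = p + 1) k ?_
  rintro (rfl | rfl)
  · rw [Equiv.swap_apply_left, kpGamma_right_apply_kpBeta_left_eq_zero h hf hab hc hp hq,
      zero_mul]
  · rw [Equiv.swap_apply_right, kpGamma_left_apply_kpBeta_right_eq_zero h hf hab hp hq,
      zero_mul]

lemma kpLE_comp_swap_iff (n m : V → ℕ) :
    kpLE s sD α ω (f ∘ Equiv.swap p q) (n ∘ kpBeta s α (f ∘ Equiv.swap p q))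
        (m ∘ kpBeta s α (f ∘ Equiv.swap p q))
      ↔ kpLE s sD α ω f (n ∘ kpBeta s α f) (m ∘ kpBeta s α f) :=
  (Equiv.swap p q).forall_congr fun k => by
    simp only [Function.comp_apply]
    rw [sum_kpGamma_kpBeta_comp_swap h hf hab hc hp hq (fun v => (n v : ℝ)),
      sum_kpGamma_kpBeta_comp_swap h hf hab hc hp hq (fun v => (m v : ℝ))]

end Swap

variable {s : I → V ≃ₗ[ℝ] V} {sD : I → Module.Dual ℝ V ≃ₗ[ℝ] Module.Dual ℝ V}
  {α : I → V} {αv : I → Module.Dual ℝ V} {ω : I → Module.Dual ℝ V}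

theorem exists_ofFn_eq_and_kpLE_iff (h : IsReflectionSystem s sD α αv ω) {N : ℕ}
    (ii : Fin N → I) (n m : V → ℕ) {l : List I}
    (hl : Relation.ReflTransGen (CommutationMove s) (List.ofFn ii) l) :
    ∃ jj : Fin N → I, List.ofFn jj = l ∧
      (kpLE s sD α ω ii (n ∘ kpBeta s α ii) (m ∘ kpBeta s α ii)
        ↔ kpLE s sD α ω jj (n ∘ kpBeta s α jj) (m ∘ kpBeta s α jj)) := by
  induction hl with
  | refl => exact ⟨ii, rfl, Iff.rfl⟩
  | tail _ hmove ih =>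
    obtain ⟨f, hf, hiff⟩ := ih
    obtain ⟨a, b, x, y, hc, rfl, rfl⟩ := hmove
    by_cases hab : a = b
    · subst hab
      exact ⟨f, hf, hiff⟩
    have hN : x.length + 1 < N := by
      have := congrArg List.length hf
      simp only [List.length_ofFn, List.length_append, List.length_cons] at this
      omega
    exact ⟨f ∘ Equiv.swap ⟨x.length, by omega⟩ ⟨x.length + 1, hN⟩, ofFn_comp_swap hf rfl rfl,
      hiff.trans (kpLE_comp_swap_iff h hf hab hc rfl rfl n m).symm⟩

theorem kpLE_iff_of_reflTransGen_commutationMove (h : IsReflectionSystem s sD α αv ω) {N : ℕ}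
    {ii jj : Fin N → I}
    (hcomm : Relation.ReflTransGen (CommutationMove s) (List.ofFn ii) (List.ofFn jj))
    (n m : V → ℕ) :
    kpLE s sD α ω ii (n ∘ kpBeta s α ii) (m ∘ kpBeta s α ii)
      ↔ kpLE s sD α ω jj (n ∘ kpBeta s α jj) (m ∘ kpBeta s α jj) := by
  obtain ⟨jj', hjj', hiff⟩ := exists_ofFn_eq_and_kpLE_iff h ii n m hcomm
  rwa [List.ofFn_injective hjj'] at hiff

end KostantPartition

theorem stmt_6_general
    {I : Type} [DecidableEq I]
    {V : Type} [AddCommGroup V] [Module ℝ V]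
    (s : I → V ≃ₗ[ℝ] V)
    (sD : I → Module.Dual ℝ V ≃ₗ[ℝ] Module.Dual ℝ V)
    (α : I → V) (αv : I → Module.Dual ℝ V) (ω : I → Module.Dual ℝ V)
    (hs : ∀ i v, s i v = v - αv i v • α i)
    (hαα : ∀ i, αv i (α i) = 2)
    (hsD : ∀ i (f : Module.Dual ℝ V) (v : V), sD i f (s i v) = f v)
    (hω : ∀ i j, ω i (α j) = if i = j then (1 : ℝ) else 0)
    (N : ℕ) (ii jj : Fin N → I)
    -- the two words are in the same commutation class
    (hcomm : Relation.ReflTransGen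
      (fun l₁ l₂ : List I => ∃ (a b : I) (x y : List I),
        s a * s b = s b * s a ∧ l₁ = x ++ a :: b :: y ∧ l₂ = x ++ b :: a :: y)
      (List.ofFn ii) (List.ofFn jj))
    (n m : V → ℕ) :
    (∀ k : Fin N,
        ∑ t ∈ Finset.univ.filter (fun t => t ≤ k),
          kpGamma sD ω ii k (kpBeta s α ii t) * (n (kpBeta s α ii t) : ℝ)
        ≤ ∑ t ∈ Finset.univ.filter (fun t => t ≤ k),
          kpGamma sD ω ii k (kpBeta s α ii t) * (m (kpBeta s α ii t) : ℝ))
    ↔ (∀ k : Fin N,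
        ∑ t ∈ Finset.univ.filter (fun t => t ≤ k),
          kpGamma sD ω jj k (kpBeta s α jj t) * (n (kpBeta s α jj t) : ℝ)
        ≤ ∑ t ∈ Finset.univ.filter (fun t => t ≤ k),
          kpGamma sD ω jj k (kpBeta s α jj t) * (m (kpBeta s α jj t) : ℝ)) :=
  KostantPartition.kpLE_iff_of_reflTransGen_commutationMove ⟨hs, hαα, hsD, hω⟩ hcomm n m

/-- Two reduced expressions of the longest element `w₀` in the same commutation class
induce the same partial order on Kostant partitions of any `ν`. -/
theorem stmt_6
    {I : Type} [Fintype I] [DecidableEq I]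
    {V : Type} [AddCommGroup V] [Module ℝ V]
    (s : I → V ≃ₗ[ℝ] V)
    (sD : I → Module.Dual ℝ V ≃ₗ[ℝ] Module.Dual ℝ V)
    (α : I → V) (αv : I → Module.Dual ℝ V) (ω : I → Module.Dual ℝ V)
    (hs : ∀ i v, s i v = v - αv i v • α i)
    (hαα : ∀ i, αv i (α i) = 2)
    (hcrys : ∀ i j, ∃ z : ℤ, αv i (α j) = (z : ℝ))
    (hsD : ∀ i (f : Module.Dual ℝ V) (v : V), sD i f (s i v) = f v)
    (hω : ∀ i j, ω i (α j) = if i = j then (1 : ℝ) else 0)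
    (N : ℕ) (ii jj : Fin N → I)
    -- both words are reduced expressions of the same (longest) element
    (hsame : ((List.ofFn ii).map s).prod = ((List.ofFn jj).map s).prod)
    (hred : ∀ l : List I, (l.map s).prod = ((List.ofFn ii).map s).prod → N ≤ l.length)
    (hlong : ∀ l : List I, ∃ l' : List I, l'.length ≤ N ∧
      (l'.map s).prod = (l.map s).prod)
    -- the two words are in the same commutation class
    (hcomm : Relation.ReflTransGen
      (fun l₁ l₂ : List I => ∃ (a b : I) (x y : List I),
        s a * s b = s b * s a ∧ l₁ = x ++ a :: b :: y ∧ l₂ = x ++ b :: a :: y)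
      (List.ofFn ii) (List.ofFn jj))
    (ν : V) (n m : V → ℕ)
    -- `n` and `m` are Kostant partitions of `ν`, viewed as multiplicity functions on
    -- the set of positive roots
    (hn : ∑ k, (n (kpBeta s α ii k) : ℝ) • kpBeta s α ii k = ν)
    (hm : ∑ k, (m (kpBeta s α ii k) : ℝ) • kpBeta s α ii k = ν) :
    (∀ k : Fin N,
        ∑ t ∈ Finset.univ.filter (fun t => t ≤ k),
          kpGamma sD ω ii k (kpBeta s α ii t) * (n (kpBeta s α ii t) : ℝ)
        ≤ ∑ t ∈ Finset.univ.filter (fun t => t ≤ k),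
          kpGamma sD ω ii k (kpBeta s α ii t) * (m (kpBeta s α ii t) : ℝ))
    ↔ (∀ k : Fin N,
        ∑ t ∈ Finset.univ.filter (fun t => t ≤ k),
          kpGamma sD ω jj k (kpBeta s α jj t) * (n (kpBeta s α jj t) : ℝ)
        ≤ ∑ t ∈ Finset.univ.filter (fun t => t ≤ k),
          kpGamma sD ω jj k (kpBeta s α jj t) * (m (kpBeta s α jj t) : ℝ)) :=
  stmt_6_general s sD α αv ω hs hαα hsD hω N ii jj hcomm n m
end

section
/- Let M be a representation of a quiver Q of finite ADE type over a field, decomposed as M(λ) = ⊕_i M(β_i)^{n_i} where the M(β_i) are the indecomposables indexed by positive roots via Gabriel's theorem. If Hom(M(β_k), M(β_l)) = 0 whenever k > l and End(M(β_i)) ≅ k for all i, then the group of units End(M(λ))^× admits a surjective group homomorphism onto ∏_i GL_{n_i}(k) whose kernel is unipotent (consists of elements of the form 1 + n with n nilpotent). -/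
/-!
Write an endomorphism of `⊕ᵢ Xᵢ`, `Xᵢ = M(βᵢ)^{nᵢ}`, as a block matrix `(fᵢⱼ : Xⱼ → Xᵢ)`. The
vanishing of `Hom(M(βₖ), M(β_l))` for `k > l` makes it block upper triangular, so taking the
diagonal blocks is a ring homomorphism `End(⊕ᵢ Xᵢ) → ∏ᵢ End(Xᵢ)`, split by the block-diagonal
embedding. Its kernel consists of strictly block upper triangular endomorphisms, which are
nilpotent. Finally `End(Xᵢ) ≅ Mat_{nᵢ}(End M(βᵢ)) ≅ Mat_{nᵢ}(k)`.
-/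

namespace Module.End

section Semiring

variable {R : Type*} [Semiring R] {ι : Type*} [DecidableEq ι]
  {X : ι → Type*} [∀ i, AddCommMonoid (X i)] [∀ i, Module R (X i)]

def block (f : Module.End R (Π i, X i)) (i j : ι) : X j →ₗ[R] X i :=
  LinearMap.proj i ∘ₗ f ∘ₗ LinearMap.single R X j

theorem apply_eq_sum_block [Fintype ι] (f : Module.End R (Π i, X i)) (v : Π i, X i) (i : ι) :
    f v i = ∑ j, block f i j (v j) := by
  conv_lhs => rw [← Finset.univ_sum_single v]
  simp only [map_sum, Finset.sum_apply]
  rfl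

theorem block_one_self (i : ι) : block (1 : Module.End R (Π i, X i)) i i = 1 := by
  ext x
  simp [block]

def blockDiagonal : (Π i, Module.End R (X i)) →* Module.End R (Π i, X i) where
  toFun := LinearMap.piMap
  map_one' := rfl
  map_mul' _ _ := rfl

theorem block_blockDiagonal_self (g : Π i, Module.End R (X i)) (i : ι) :
    block (blockDiagonal g) i i = g i := by
  ext x
  change g i (Pi.single i x i) = g i x
  simp

variable [LinearOrder ι]

theorem block_eq_zero_of_lt (hX : ∀ i j : ι, j < i → ∀ g : X i →ₗ[R] X j, g = 0)
    (f : Module.End R (Π i, X i)) {i j : ι} (h : i < j) : block f i j = 0 :=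
  hX j i h _

theorem block_mul_self [Fintype ι] (hX : ∀ i j : ι, j < i → ∀ g : X i →ₗ[R] X j, g = 0)
    (f g : Module.End R (Π i, X i)) (i : ι) :
    block (f * g) i i = block f i i * block g i i := by
  ext x
  change f (g (Pi.single i x)) i = _
  rw [apply_eq_sum_block f, Finset.sum_eq_single i]
  · rfl
  · intro j _ hji
    rcases hji.lt_or_gt with hji | hij
    · change block f i j (block g j i x) = 0
      rw [block_eq_zero_of_lt hX g hji, LinearMap.zero_apply, map_zero]
    · rw [block_eq_zero_of_lt hX f hij, LinearMap.zero_apply]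
  · simp

def diagBlockHom [Fintype ι] (hX : ∀ i j : ι, j < i → ∀ g : X i →ₗ[R] X j, g = 0) (i : ι) :
    Module.End R (Π i, X i) →+* Module.End R (X i) where
  toFun f := block f i i
  map_one' := block_one_self i
  map_mul' f g := block_mul_self hX f g i
  map_zero' := rfl
  map_add' _ _ := rfl

theorem isNilpotent_of_block_self_eq_zero [Fintype ι] [LocallyFiniteOrderBot ι]
    (hX : ∀ i j : ι, j < i → ∀ g : X i →ₗ[R] X j, g = 0)
    (f : Module.End R (Π i, X i)) (hf : ∀ i, block f i i = 0) : IsNilpotent f := by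
  have key : ∀ m v i, (Finset.Iic i).card ≤ m → (f ^ m) v i = 0 := by
    intro m
    induction m with
    | zero =>
      intro v i h
      have : 0 < (Finset.Iic i).card := Finset.card_pos.mpr ⟨i, Finset.mem_Iic.mpr le_rfl⟩
      omega
    | succ m ih =>
      intro v i h
      rw [pow_succ', Module.End.mul_apply, apply_eq_sum_block]
      refine Finset.sum_eq_zero fun j _ => ?_
      rcases lt_trichotomy j i with hji | rfl | hij
      · have : (Finset.Iic j).card < (Finset.Iic i).card :=
          Finset.card_lt_card (Finset.Iic_ssubset_Iic.mpr hji)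
        rw [ih v j (by omega), map_zero]
      · rw [hf, LinearMap.zero_apply]
      · rw [block_eq_zero_of_lt hX f hij, LinearMap.zero_apply]
  exact ⟨Fintype.card ι, LinearMap.ext fun v => funext fun i =>
    key _ v i (Finset.card_le_univ _)⟩

end Semiring

section Ring

variable {R : Type*} [Ring R] {ι : Type*} [Fintype ι] [DecidableEq ι] [LinearOrder ι]
  {X : ι → Type*} [∀ i, AddCommGroup (X i)] [∀ i, Module R (X i)]

def diagUnitsHom (hX : ∀ i j : ι, j < i → ∀ g : X i →ₗ[R] X j, g = 0) :
    (Module.End R (Π i, X i))ˣ →* Π i, (Module.End R (X i))ˣ :=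
  MulEquiv.piUnits.toMonoidHom.comp (Units.map (RingHom.pi (diagBlockHom hX)).toMonoidHom)

theorem diagUnitsHom_surjective (hX : ∀ i j : ι, j < i → ∀ g : X i →ₗ[R] X j, g = 0) :
    Function.Surjective (diagUnitsHom hX) := by
  have hsection : (RingHom.pi (diagBlockHom hX)).toMonoidHom.comp blockDiagonal =
      MonoidHom.id _ :=
    MonoidHom.ext fun g => funext (block_blockDiagonal_self g)
  intro w
  refine ⟨Units.map blockDiagonal (MulEquiv.piUnits.symm w), ?_⟩
  rw [diagUnitsHom, MonoidHom.comp_apply, ← MonoidHom.comp_apply (Units.map _),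
    ← Units.map_comp, hsection, Units.map_id, MonoidHom.id_apply]
  exact MulEquiv.apply_symm_apply _ w

theorem isNilpotent_sub_one_of_diagUnitsHom_eq_one [LocallyFiniteOrderBot ι]
    (hX : ∀ i j : ι, j < i → ∀ g : X i →ₗ[R] X j, g = 0)
    (u : (Module.End R (Π i, X i))ˣ) (hu : diagUnitsHom hX u = 1) :
    IsNilpotent ((u : Module.End R (Π i, X i)) - 1) := by
  rw [diagUnitsHom, MonoidHom.comp_apply, MulEquiv.coe_toMonoidHom,
    MulEquiv.map_eq_one_iff] at hu
  have hdiag : RingHom.pi (diagBlockHom hX) u = 1 := congrArg Units.val hu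
  refine isNilpotent_of_block_self_eq_zero hX _ fun i => ?_
  change diagBlockHom hX i (u - 1) = 0
  rw [map_sub, map_one, sub_eq_zero]
  exact congrFun hdiag i

end Ring

end Module.End

theorem LinearMap.pi_eq_zero_of_forall_eq_zero {R M N : Type*} [Semiring R]
    [AddCommMonoid M] [Module R M] [AddCommMonoid N] [Module R N]
    (h : ∀ g : M →ₗ[R] N, g = 0) {κ κ' : Type*} [Finite κ] [DecidableEq κ]
    (g : (κ → M) →ₗ[R] (κ' → N)) : g = 0 := by
  ext b x a
  exact LinearMap.congr_fun (h (LinearMap.proj a ∘ₗ g ∘ₗ LinearMap.single R (fun _ => M) b)) x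

section Scalars

variable {k R M : Type*} [Semiring k] [Semiring R] [AddCommMonoid M] [Module R M]
  [Module k M] [SMulCommClass R k M]

noncomputable def ringEquivEndOfBijective
    (h : Function.Bijective fun c : k => c • (LinearMap.id : Module.End R M)) :
    k ≃+* Module.End R M :=
  haveI := SMulCommClass.symm R k M
  RingEquiv.ofBijective (Module.toModuleEnd R M) h

noncomputable def endPiRingEquivMatrix
    (h : Function.Bijective fun c : k => c • (LinearMap.id : Module.End R M))
    (κ : Type*) [Fintype κ] [DecidableEq κ] :
    Module.End R (κ → M) ≃+* Matrix κ κ k :=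
  (endVecRingEquivMatrixEnd κ R M).trans (ringEquivEndOfBijective h).symm.mapMatrix

end Scalars

theorem stmt_13_general
    {k : Type} [Field k] {R : Type} [Ring R]
    (N : ℕ) (M : Fin N → Type)
    [∀ i, AddCommGroup (M i)] [∀ i, Module R (M i)]
    [∀ i, Module k (M i)]
    [∀ i, SMulCommClass R k (M i)]
    -- `End(M(βᵢ)) ≅ k`
    (hEnd : ∀ i, Function.Bijective
      (fun c : k => (c • (LinearMap.id : Module.End R (M i)))))
    -- `Hom(M(βₖ), M(β_l)) = 0` whenever `k > l`
    (hHom : ∀ i j : Fin N, j < i → ∀ f : M i →ₗ[R] M j, f = 0)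
    -- the multiplicities
    (n : Fin N → ℕ) :
    ∃ φ : ((Module.End R ((i : Fin N) → Fin (n i) → M i))ˣ) →*
        ((i : Fin N) → Matrix.GeneralLinearGroup (Fin (n i)) k),
      Function.Surjective φ ∧
      ∀ u : (Module.End R ((i : Fin N) → Fin (n i) → M i))ˣ,
        φ u = 1 → ∃ nl : Module.End R ((i : Fin N) → Fin (n i) → M i),
          IsNilpotent nl ∧ (u : Module.End R ((i : Fin N) → Fin (n i) → M i)) = 1 + nl := by
  have hX : ∀ i j : Fin N, j < i →
      ∀ g : (Fin (n i) → M i) →ₗ[R] (Fin (n j) → M j), g = 0 :=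
    fun i j hji => LinearMap.pi_eq_zero_of_forall_eq_zero (hHom i j hji)
  let toMatrices := MulEquiv.piCongrRight fun i =>
    Units.mapEquiv (endPiRingEquivMatrix (hEnd i) (Fin (n i))).toMulEquiv
  refine ⟨toMatrices.toMonoidHom.comp (Module.End.diagUnitsHom hX),
    toMatrices.surjective.comp (Module.End.diagUnitsHom_surjective hX), fun u hu => ?_⟩
  rw [MonoidHom.comp_apply, MulEquiv.coe_toMonoidHom, MulEquiv.map_eq_one_iff] at hu
  exact ⟨_, Module.End.isNilpotent_sub_one_of_diagUnitsHom_eq_one hX u hu,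
    (add_sub_cancel _ _).symm⟩

/-- Let `M(λ) = ⊕ᵢ M(βᵢ)^{nᵢ}` be a representation of a finite ADE quiver (a module over
its path algebra `R`), where the indecomposables satisfy `Hom(M(βₖ), M(β_l)) = 0` for
`k > l` and `End(M(βᵢ)) ≅ k`.  Then the unit group `End(M(λ))ˣ` surjects onto
`∏ᵢ GLₙᵢ(k)` with unipotent kernel. -/
theorem stmt_13
    {k : Type} [Field k] {R : Type} [Ring R] [Algebra k R]
    (N : ℕ) (M : Fin N → Type)
    [∀ i, AddCommGroup (M i)] [∀ i, Module R (M i)]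
    [∀ i, Module k (M i)] [∀ i, IsScalarTower k R (M i)]
    [∀ i, SMulCommClass R k (M i)]
    -- `End(M(βᵢ)) ≅ k`
    (hEnd : ∀ i, Function.Bijective
      (fun c : k => (c • (LinearMap.id : Module.End R (M i)))))
    -- `Hom(M(βₖ), M(β_l)) = 0` whenever `k > l`
    (hHom : ∀ i j : Fin N, j < i → ∀ f : M i →ₗ[R] M j, f = 0)
    -- the multiplicities
    (n : Fin N → ℕ) :
    ∃ φ : ((Module.End R ((i : Fin N) → Fin (n i) → M i))ˣ) →*
        ((i : Fin N) → Matrix.GeneralLinearGroup (Fin (n i)) k),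
      Function.Surjective φ ∧
      ∀ u : (Module.End R ((i : Fin N) → Fin (n i) → M i))ˣ,
        φ u = 1 → ∃ nl : Module.End R ((i : Fin N) → Fin (n i) → M i),
          IsNilpotent nl ∧ (u : Module.End R ((i : Fin N) → Fin (n i) → M i)) = 1 + nl :=
  stmt_13_general N M hEnd hHom n
end
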